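/- arXiv:0805.2882 — 5 statements merged into one kernel-verified Lean document; each statement's English description precedes it below -/
import Mathlib

section
/- Let ρ, ρ_d : ℝ → Matrix (Fin n) (Fin n) ℂ be differentiable and satisfy ρ'(t) = −i[H₀ + f(t)·H₁, ρ(t)] and ρ_d'(t) = −i[H₀, ρ_d(t)], where f(t) = κ·Re(Tr([−iH₁, ρ(t)]·ρ_d(t))) with κ > 0, and suppose ρ(0) and ρ_d(0) are Hermitian. Then the function t ↦ ½ Re(Tr((ρ(t) − ρ_d(t))²)) is nonincreasing on [0,∞), nonnegative, and converges to a limit L ≥ 0 as t → +∞. -/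
/-!
Both equations have the von Neumann form `X' = -i[H(t), X]` with `H(t)` Hermitian, and such a
flow conserves `Tr(Xᴴ X)`. Since `Xᴴ` solves the same equation, applying this to `Xᴴ - X`, which
vanishes at `t = 0`, shows that `ρ` and `ρ_d` stay Hermitian, so `V = ½ Tr(Eᴴ E) ≥ 0` for
`E = ρ - ρ_d`. The drift `-i[H₀, ·]` does not change `Tr(E²)`, and the control term gives
`V' = -f(t) · Re Tr(-i[H₁, ρ] ρ_d) = -κ (Re Tr(-i[H₁, ρ] ρ_d))² ≤ 0`; being antitone and bounded
below, `V` converges.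
-/

open Matrix Complex
open scoped ComplexOrder

section

variable {ι : Type*} [Fintype ι]

theorem hasDerivAt_trace_mul {A B : ℝ → Matrix ι ι ℂ} {A' B' : Matrix ι ι ℂ} {t : ℝ}
    (hA : ∀ i j, HasDerivAt (fun s => A s i j) (A' i j) t)
    (hB : ∀ i j, HasDerivAt (fun s => B s i j) (B' i j) t) :
    HasDerivAt (fun s => (A s * B s).trace) ((A' * B t).trace + (A t * B').trace) t := by
  simp only [trace, diag, mul_apply, ← Finset.sum_add_distrib]
  exact .fun_sum fun i _ => .fun_sum fun j _ => (hA i j).mul (hB j i)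

theorem Matrix.IsHermitian.re_trace_sq_nonneg [DecidableEq ι] {A : Matrix ι ι ℂ}
    (hA : A.IsHermitian) : 0 ≤ (A ^ 2).trace.re := by
  have := (posSemidef_conjTranspose_mul_self A).trace_nonneg
  rw [hA.eq, ← sq] at this
  exact (Complex.nonneg_iff.mp this).1

def liouvillian (H X : Matrix ι ι ℂ) : Matrix ι ι ℂ :=
  -I • (H * X - X * H)

theorem conjTranspose_liouvillian {H : Matrix ι ι ℂ} (hH : H.IsHermitian) (X : Matrix ι ι ℂ) :
    (liouvillian H X)ᴴ = liouvillian H Xᴴ := by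
  rw [liouvillian, liouvillian, conjTranspose_smul, conjTranspose_sub, conjTranspose_mul,
    conjTranspose_mul, hH.eq, star_neg, star_def, conj_I, neg_neg, ← neg_sub, smul_neg, neg_smul]

section Liouvillian

variable (H H' X Y : Matrix ι ι ℂ)

theorem liouvillian_sub : liouvillian H (X - Y) = liouvillian H X - liouvillian H Y := by
  simp only [liouvillian, mul_sub, sub_mul, smul_sub]
  abel

theorem add_smul_liouvillian (u : ℂ) :
    liouvillian (H + u • H') X = liouvillian H X + u • liouvillian H' X := by
  simp only [liouvillian, add_mul, mul_add, Matrix.smul_mul, Matrix.mul_smul]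
  module

theorem trace_mul_liouvillian_self : (X * liouvillian H X).trace = 0 := by
  rw [liouvillian, Matrix.mul_smul, trace_smul, mul_sub, trace_sub, ← mul_assoc, ← mul_assoc,
    trace_mul_cycle X H X, sub_self, smul_zero]

-- `liouvillian H` is a derivation, and the trace of a commutator vanishes.
theorem trace_liouvillian_mul_add_mul_liouvillian :
    (liouvillian H Y * X).trace + (Y * liouvillian H X).trace = 0 := by
  rw [liouvillian, liouvillian, Matrix.smul_mul, Matrix.mul_smul, trace_smul, trace_smul,
    ← smul_add, sub_mul, mul_sub, trace_sub, trace_sub, ← mul_assoc, ← mul_assoc, mul_assoc H,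
    trace_mul_comm (Y * X) H, sub_add_sub_cancel, sub_self, smul_zero]

end Liouvillian

theorem trace_sub_mul_liouvillian_sub (H₀ H₁ ρ ρd : Matrix ι ι ℂ) (u : ℂ) :
    ((ρ - ρd) * (liouvillian (H₀ + u • H₁) ρ - liouvillian H₀ ρd)).trace
      = -u * (liouvillian H₁ ρ * ρd).trace := by
  have hsplit : liouvillian (H₀ + u • H₁) ρ - liouvillian H₀ ρd
      = liouvillian H₀ (ρ - ρd) + u • liouvillian H₁ ρ := by
    rw [add_smul_liouvillian, liouvillian_sub]
    abel
  rw [hsplit, mul_add, trace_add, trace_mul_liouvillian_self, zero_add, Matrix.mul_smul,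
    trace_smul, sub_mul, trace_sub, trace_mul_liouvillian_self, trace_mul_comm ρd, smul_eq_mul]
  ring

def SolvesVonNeumann (H X : ℝ → Matrix ι ι ℂ) : Prop :=
  ∀ t i j, HasDerivAt (fun s => X s i j) (liouvillian (H t) (X t) i j) t

namespace SolvesVonNeumann

variable {H X Y : ℝ → Matrix ι ι ℂ}

theorem sub (hX : SolvesVonNeumann H X) (hY : SolvesVonNeumann H Y) :
    SolvesVonNeumann H (X - Y) := fun t i j => by
  rw [Pi.sub_apply, liouvillian_sub, Matrix.sub_apply]
  exact (hX t i j).sub (hY t i j)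

theorem conjTranspose (hH : ∀ t, (H t).IsHermitian) (hX : SolvesVonNeumann H X) :
    SolvesVonNeumann H (fun s => (X s)ᴴ) := fun t i j => by
  rw [← conjTranspose_liouvillian (hH t)]
  exact (hX t j i).star

theorem trace_conjTranspose_mul_self_eq (hH : ∀ t, (H t).IsHermitian)
    (hX : SolvesVonNeumann H X) (t : ℝ) :
    ((X t)ᴴ * X t).trace = ((X 0)ᴴ * X 0).trace := by
  have hderiv : ∀ t, HasDerivAt (fun s => ((X s)ᴴ * X s).trace) 0 t := fun t => by
    convert hasDerivAt_trace_mul (hX.conjTranspose hH t) (hX t) using 1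
    exact (trace_liouvillian_mul_add_mul_liouvillian _ _ _).symm
  exact is_const_of_deriv_eq_zero (fun s => (hderiv s).differentiableAt)
    (fun s => (hderiv s).deriv) t 0

theorem isHermitian (hH : ∀ t, (H t).IsHermitian) (hX : SolvesVonNeumann H X)
    (h0 : (X 0).IsHermitian) (t : ℝ) : (X t).IsHermitian := by
  have := ((hX.conjTranspose hH).sub hX).trace_conjTranspose_mul_self_eq hH t
  rwa [Pi.sub_apply, Pi.sub_apply, h0.eq, sub_self, mul_zero, trace_zero,
    trace_conjTranspose_mul_self_eq_zero_iff, sub_eq_zero] at this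

end SolvesVonNeumann

theorem hasDerivAt_half_re_trace_sq_sub [DecidableEq ι] {H₀ H₁ : Matrix ι ι ℂ} {u : ℝ → ℝ}
    {ρ ρd : ℝ → Matrix ι ι ℂ} (hρ : SolvesVonNeumann (fun t => H₀ + (u t : ℂ) • H₁) ρ)
    (hρd : SolvesVonNeumann (fun _ => H₀) ρd) (t : ℝ) :
    HasDerivAt (fun s => (1 / 2 : ℝ) * ((ρ s - ρd s) ^ 2).trace.re)
      (-u t * (liouvillian H₁ (ρ t) * ρd t).trace.re) t := by
  have hE : ∀ i j, HasDerivAt (fun s => (ρ s - ρd s) i j)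
      ((liouvillian (H₀ + (u t : ℂ) • H₁) (ρ t) - liouvillian H₀ (ρd t)) i j) t :=
    fun i j => (hρ t i j).sub (hρd t i j)
  have hV := (reCLM.hasFDerivAt.comp_hasDerivAt t (hasDerivAt_trace_mul hE hE)).const_mul
    (1 / 2 : ℝ)
  simp only [sq]
  refine hV.congr_deriv ?_
  simp only [reCLM_apply]
  rw [trace_mul_comm (liouvillian _ _ - _), ← two_mul, trace_sub_mul_liouvillian_sub]
  simp

end

theorem stmt1_general {n : ℕ} (H₀ H₁ : Matrix (Fin n) (Fin n) ℂ)
    (hH₀ : H₀.IsHermitian) (hH₁ : H₁.IsHermitian)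
    (κ : ℝ) (hκ : 0 < κ)
    (ρ ρd : ℝ → Matrix (Fin n) (Fin n) ℂ)
    (f : ℝ → ℝ)
    (hf : ∀ t, f t =
      κ * (Matrix.trace (((-Complex.I) • (H₁ * ρ t - ρ t * H₁)) * ρd t)).re)
    (hρ : ∀ t, ∀ i j : Fin n, HasDerivAt (fun s => ρ s i j)
      (((-Complex.I) • ((H₀ + (f t : ℂ) • H₁) * ρ t - ρ t * (H₀ + (f t : ℂ) • H₁))) i j) t)
    (hρd : ∀ t, ∀ i j : Fin n, HasDerivAt (fun s => ρd s i j)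
      (((-Complex.I) • (H₀ * ρd t - ρd t * H₀)) i j) t)
    (hρ0 : (ρ 0).IsHermitian) (hρd0 : (ρd 0).IsHermitian)
    (V : ℝ → ℝ)
    (hV : ∀ t, V t = (1 / 2 : ℝ) * (Matrix.trace ((ρ t - ρd t) ^ 2)).re) :
    AntitoneOn V (Set.Ici (0 : ℝ)) ∧ (∀ t ∈ Set.Ici (0 : ℝ), 0 ≤ V t) ∧
      ∃ L : ℝ, 0 ≤ L ∧ Filter.Tendsto V Filter.atTop (nhds L) := by
  obtain rfl : V = fun t => (1 / 2 : ℝ) * ((ρ t - ρd t) ^ 2).trace.re := funext hV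
  have hρ_sol : SolvesVonNeumann (fun t => H₀ + (f t : ℂ) • H₁) ρ := hρ
  have hρd_sol : SolvesVonNeumann (fun _ => H₀) ρd := hρd
  have hanti := antitone_of_hasDerivAt_nonpos (hasDerivAt_half_re_trace_sq_sub hρ_sol hρd_sol)
    fun t => by
      change -f t * (liouvillian H₁ (ρ t) * ρd t).trace.re ≤ 0
      rw [hf t, neg_mul, neg_nonpos, mul_assoc]
      exact mul_nonneg hκ.le (mul_self_nonneg _)
  have hH : ∀ t, (H₀ + (f t : ℂ) • H₁).IsHermitian := fun t => hH₀.add (hH₁.smul (conj_ofReal _))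
  have hnonneg : ∀ t, 0 ≤ (1 / 2 : ℝ) * ((ρ t - ρd t) ^ 2).trace.re := fun t =>
    mul_nonneg one_half_pos.le <| ((hρ_sol.isHermitian hH hρ0 t).sub
      (hρd_sol.isHermitian (fun _ => hH₀) hρd0 t)).re_trace_sq_nonneg
  exact ⟨hanti.antitoneOn _, fun t _ => hnonneg t, _, le_ciInf hnonneg,
    tendsto_atTop_ciInf hanti ⟨0, Set.forall_mem_range.2 hnonneg⟩⟩

/-- With the Lyapunov feedback law and Hermitian initial conditions,
`V(t) = ½ Re Tr((ρ(t) - ρ_d(t))²)` is nonincreasing on `[0,∞)`, nonnegative there,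
and converges to a limit `L ≥ 0` as `t → +∞`. -/
theorem stmt1 {n : ℕ} (hn : 2 ≤ n) (H₀ H₁ : Matrix (Fin n) (Fin n) ℂ)
    (hH₀ : H₀.IsHermitian) (hH₁ : H₁.IsHermitian)
    (κ : ℝ) (hκ : 0 < κ)
    (ρ ρd : ℝ → Matrix (Fin n) (Fin n) ℂ)
    (f : ℝ → ℝ)
    (hf : ∀ t, f t =
      κ * (Matrix.trace (((-Complex.I) • (H₁ * ρ t - ρ t * H₁)) * ρd t)).re)
    (hρ : ∀ t, ∀ i j : Fin n, HasDerivAt (fun s => ρ s i j)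
      (((-Complex.I) • ((H₀ + (f t : ℂ) • H₁) * ρ t - ρ t * (H₀ + (f t : ℂ) • H₁))) i j) t)
    (hρd : ∀ t, ∀ i j : Fin n, HasDerivAt (fun s => ρd s i j)
      (((-Complex.I) • (H₀ * ρd t - ρd t * H₀)) i j) t)
    (hρ0 : (ρ 0).IsHermitian) (hρd0 : (ρd 0).IsHermitian)
    (V : ℝ → ℝ)
    (hV : ∀ t, V t = (1 / 2 : ℝ) * (Matrix.trace ((ρ t - ρd t) ^ 2)).re) :
    AntitoneOn V (Set.Ici (0 : ℝ)) ∧ (∀ t ∈ Set.Ici (0 : ℝ), 0 ≤ V t) ∧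
      ∃ L : ℝ, 0 ≤ L ∧ Filter.Tendsto V Filter.atTop (nhds L) :=
  stmt1_general H₀ H₁ hH₀ hH₁ κ hκ ρ ρd f hf hρ hρd hρ0 hρd0 V hV
end

section
/- Let H₀ = diag(a₁,…,aₙ) be a real diagonal n×n matrix that is strongly regular, and let H₁ be an n×n Hermitian matrix with zero diagonal that is fully connected. If M is an n×n complex matrix such that Tr(M · Ad^m_{−iH₀}(−iH₁)) = 0 for every nonnegative integer m, then M is diagonal. -/
/-!
The entries of `Ad^m_{-iH₀}(-iH₁)` are `(-iω_{ℓk})^m · (-i b_{kℓ})`, so the hypothesis on `M` says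
that `∑_{k ≠ ℓ} M_{kℓ} (-i b_{ℓk}) (-iω_{kℓ})^m = 0` for every `m`. Strong regularity makes the
nodes `-iω_{kℓ}` pairwise distinct, so the Vandermonde system forces every coefficient to vanish,
and full connectivity (`b_{ℓk} ≠ 0`) then gives `M_{kℓ} = 0`.
-/

open Matrix Complex

/-- `Ad^m_{-iH₀}(-iH₁)`: the `m`-fold iterate of `X ↦ [-iH₀, X]` applied to `-iH₁`. -/
noncomputable def adIter {n : ℕ} (H₀ H₁ : Matrix (Fin n) (Fin n) ℂ) (m : ℕ) :
    Matrix (Fin n) (Fin n) ℂ :=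
  (fun X : Matrix (Fin n) (Fin n) ℂ =>
      ((-Complex.I) • H₀) * X - X * ((-Complex.I) • H₀))^[m] ((-Complex.I) • H₁)

theorem Fintype.eq_zero_of_forall_sum_mul_pow_eq_zero {R ι : Type*} [CommRing R] [IsDomain R]
    [Fintype ι] {x c : ι → R} (hx : Function.Injective x)
    (h : ∀ m : ℕ, ∑ i, c i * x i ^ m = 0) (i : ι) : c i = 0 := by
  let e := (Fintype.equivFin ι).symm
  have hce : c ∘ e = 0 := by
    refine Matrix.eq_zero_of_forall_pow_sum_mul_pow_eq_zero (hx.comp e.injective) fun m => ?_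
    rw [← h m]
    exact e.sum_comp fun j => c j * x j ^ (m : ℕ)
  simpa [e] using congrFun hce (e.symm i)

theorem Finset.eq_zero_of_forall_sum_mul_pow_eq_zero {R ι : Type*} [CommRing R] [IsDomain R]
    {s : Finset ι} {x c : ι → R} (hx : Set.InjOn x s)
    (h : ∀ m : ℕ, ∑ i ∈ s, c i * x i ^ m = 0) {i : ι} (hi : i ∈ s) : c i = 0 :=
  Fintype.eq_zero_of_forall_sum_mul_pow_eq_zero (x := fun j : s => x j) (c := fun j : s => c j)
    hx.injective (fun m => by rw [Finset.sum_coe_sort s fun j => c j * x j ^ m, h m]) ⟨i, hi⟩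

theorem adIter_diagonal_apply {n : ℕ} (d : Fin n → ℂ) (H : Matrix (Fin n) (Fin n) ℂ) (m : ℕ)
    (k ℓ : Fin n) :
    adIter (diagonal d) H m k ℓ = (-I * (d k - d ℓ)) ^ m * (-I * H k ℓ) := by
  induction m with
  | zero => simp [adIter]
  | succ m ih =>
    rw [adIter, Function.iterate_succ_apply', ← adIter]
    simp only [Matrix.sub_apply, Matrix.smul_mul, Matrix.mul_smul, Matrix.smul_apply, diagonal_mul,
      mul_diagonal, smul_eq_mul, ih]
    ring

theorem trace_mul_adIter_diagonal {n : ℕ} (d : Fin n → ℂ) {H : Matrix (Fin n) (Fin n) ℂ}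
    (hH : ∀ k, H k k = 0) (M : Matrix (Fin n) (Fin n) ℂ) (m : ℕ) :
    trace (M * adIter (diagonal d) H m) =
      ∑ p ∈ Finset.univ.offDiag, M p.1 p.2 * (-I * H p.2 p.1) * (-I * (d p.2 - d p.1)) ^ m := by
  rw [Finset.sum_subset (Finset.subset_univ _), ← Finset.univ_product_univ, Finset.sum_product]
  · simp only [trace, diag_apply, mul_apply, adIter_diagonal_apply]
    exact Finset.sum_congr rfl fun _ _ => Finset.sum_congr rfl fun _ _ => by ring
  · rintro ⟨k, ℓ⟩ _ hkℓ
    obtain rfl : k = ℓ := by simpa using hkℓ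
    simp [hH]

theorem injOn_offDiag_of_strongly_regular {n : ℕ} {a : Fin n → ℝ}
    (hreg : ∀ k ℓ p q : Fin n, k ≠ ℓ → p ≠ q → a ℓ - a k = a q - a p → k = p ∧ ℓ = q) :
    Set.InjOn (fun p : Fin n × Fin n => -I * ((a p.2 : ℂ) - a p.1))
      (Finset.univ.offDiag : Finset (Fin n × Fin n)) := by
  intro p hp q hq hpq
  have hω : a p.2 - a p.1 = a q.2 - a q.1 := by
    exact_mod_cast mul_left_cancel₀ (neg_ne_zero.mpr I_ne_zero) hpq
  obtain ⟨h₁, h₂⟩ := hreg _ _ _ _ (Finset.mem_offDiag.mp hp).2.2 (Finset.mem_offDiag.mp hq).2.2 hω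
  exact Prod.ext h₁ h₂

theorem stmt5_general {n : ℕ} (a : Fin n → ℝ)
    (hreg : ∀ k ℓ p q : Fin n, k ≠ ℓ → p ≠ q →
      a ℓ - a k = a q - a p → k = p ∧ ℓ = q)
    (H₁ : Matrix (Fin n) (Fin n) ℂ)
    (hH₁diag : ∀ k : Fin n, H₁ k k = 0)
    (hconn : ∀ k ℓ : Fin n, k ≠ ℓ → H₁ k ℓ ≠ 0)
    (M : Matrix (Fin n) (Fin n) ℂ)
    (hM : ∀ m : ℕ,
      Matrix.trace (M * adIter (Matrix.diagonal fun i => (a i : ℂ)) H₁ m) = 0) :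
    M.IsDiag := by
  intro k ℓ hkℓ
  have hmem : (k, ℓ) ∈ (Finset.univ.offDiag : Finset (Fin n × Fin n)) := by
    simpa using hkℓ
  have hcoeff := Finset.eq_zero_of_forall_sum_mul_pow_eq_zero
    (c := fun p => M p.1 p.2 * (-I * H₁ p.2 p.1)) (injOn_offDiag_of_strongly_regular hreg)
    (fun m => (trace_mul_adIter_diagonal (fun i => (a i : ℂ)) hH₁diag M m).symm.trans (hM m)) hmem
  simpa [I_ne_zero, hconn ℓ k hkℓ.symm] using hcoeff

/-- If `H₀ = diag(a₁,…,aₙ)` is strongly regular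
(`ω_{kℓ} = a_ℓ - a_k` pairwise distinct over pairs `k ≠ ℓ`) and `H₁` is Hermitian,
zero-diagonal and fully connected, then any matrix `M` with
`Tr(M · Ad^m_{-iH₀}(-iH₁)) = 0` for every `m ≥ 0` is diagonal. -/
theorem stmt5 {n : ℕ} (a : Fin n → ℝ)
    (hreg : ∀ k ℓ p q : Fin n, k ≠ ℓ → p ≠ q →
      a ℓ - a k = a q - a p → k = p ∧ ℓ = q)
    (H₁ : Matrix (Fin n) (Fin n) ℂ) (hH₁ : H₁.IsHermitian)
    (hH₁diag : ∀ k : Fin n, H₁ k k = 0)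
    (hconn : ∀ k ℓ : Fin n, k ≠ ℓ → H₁ k ℓ ≠ 0)
    (M : Matrix (Fin n) (Fin n) ℂ)
    (hM : ∀ m : ℕ,
      Matrix.trace (M * adIter (Matrix.diagonal fun i => (a i : ℂ)) H₁ m) = 0) :
    M.IsDiag :=
  stmt5_general a hreg H₁ hH₁diag hconn M hM
end

section
/- Let H₀ be a real diagonal n×n matrix, H₁ an n×n Hermitian matrix with zero diagonal, and ρ_d a real diagonal n×n matrix. For any permutation σ of {1,…,n}, let ρ_d^{(σ)} be the diagonal matrix obtained by permuting the diagonal entries of ρ_d by σ. Then the constant function ρ(t) = ρ_d^{(σ)} is a solution of the closed-loop system ρ'(t) = −i[H₀ + f(ρ(t))·H₁, ρ(t)] with f(ρ) = κ·Re(Tr([−iH₁, ρ]·ρ_d)); that is, f(ρ_d^{(σ)}) = 0 and [H₀, ρ_d^{(σ)}] = 0. -/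
open Matrix Complex

/-! By cyclicity of the trace, `Tr([A, B] C) = Tr(A [B, C])`. With `B = ρ_d^{(σ)}` and `C = ρ_d`
both diagonal, hence commuting, the feedback `f(ρ_d^{(σ)})` vanishes; and `H₀` is diagonal too, so it
commutes with `ρ_d^{(σ)}`. -/

theorem Matrix.trace_commutator_mul {n R : Type*} [Fintype n] [CommRing R]
    (A B C : Matrix n n R) :
    trace ((A * B - B * A) * C) = trace (A * (B * C - C * B)) := by
  rw [Matrix.sub_mul, Matrix.mul_sub, trace_sub, trace_sub, Matrix.mul_assoc, Matrix.mul_assoc,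
    trace_mul_comm B, Matrix.mul_assoc]

theorem Matrix.trace_commutator_mul_eq_zero_of_commute {n R : Type*} [Fintype n] [CommRing R]
    (A : Matrix n n R) {B C : Matrix n n R} (h : Commute B C) :
    trace ((A * B - B * A) * C) = 0 := by
  rw [trace_commutator_mul, h.eq, sub_self, Matrix.mul_zero, trace_zero]

theorem stmt10_general {n : ℕ} (a : Fin n → ℝ) (H₀ H₁ : Matrix (Fin n) (Fin n) ℂ)
    (hH₀ : H₀ = Matrix.diagonal fun k => (a k : ℂ))
    (w : Fin n → ℝ) (ρd : Matrix (Fin n) (Fin n) ℂ)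
    (hρd : ρd = Matrix.diagonal fun k => (w k : ℂ))
    (κ : ℝ)
    (f : Matrix (Fin n) (Fin n) ℂ → ℝ)
    (hf : ∀ ρ, f ρ =
      κ * (Matrix.trace (((-Complex.I) • (H₁ * ρ - ρ * H₁)) * ρd)).re)
    (σ : Equiv.Perm (Fin n)) :
    f (Matrix.diagonal fun k => (w (σ k) : ℂ)) = 0 ∧
    H₀ * (Matrix.diagonal fun k => (w (σ k) : ℂ))
      - (Matrix.diagonal fun k => (w (σ k) : ℂ)) * H₀ = 0 := by
  constructor
  · rw [hf, hρd, smul_mul, trace_smul,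
      trace_commutator_mul_eq_zero_of_commute H₁ (commute_diagonal _ _)]
    simp
  · rw [hH₀, (commute_diagonal _ _).eq, sub_self]

/-- For `H₀` real diagonal, `H₁` Hermitian with zero diagonal, and a
real diagonal target `ρ_d`, every permutation `ρ_d^{(σ)}` of the diagonal entries
of `ρ_d` yields a constant solution of the closed-loop system
`ρ' = -i[H₀ + f(ρ)H₁, ρ]`, `f(ρ) = κ Re Tr([-iH₁, ρ] ρ_d)`:
namely `f(ρ_d^{(σ)}) = 0` and `[H₀, ρ_d^{(σ)}] = 0`. -/
theorem stmt10 {n : ℕ} (a : Fin n → ℝ) (H₀ H₁ : Matrix (Fin n) (Fin n) ℂ)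
    (hH₀ : H₀ = Matrix.diagonal fun k => (a k : ℂ))
    (hH₁ : H₁.IsHermitian) (hH₁diag : ∀ k : Fin n, H₁ k k = 0)
    (w : Fin n → ℝ) (ρd : Matrix (Fin n) (Fin n) ℂ)
    (hρd : ρd = Matrix.diagonal fun k => (w k : ℂ))
    (κ : ℝ) (hκ : 0 < κ)
    (f : Matrix (Fin n) (Fin n) ℂ → ℝ)
    (hf : ∀ ρ, f ρ =
      κ * (Matrix.trace (((-Complex.I) • (H₁ * ρ - ρ * H₁)) * ρd)).re)
    (σ : Equiv.Perm (Fin n)) :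
    f (Matrix.diagonal fun k => (w (σ k) : ℂ)) = 0 ∧
    H₀ * (Matrix.diagonal fun k => (w (σ k) : ℂ))
      - (Matrix.diagonal fun k => (w (σ k) : ℂ)) * H₀ = 0 :=
  stmt10_general a H₀ H₁ hH₀ w ρd hρd κ f hf σ
end

section
/- Let ρ_d = diag(w₁,…,wₙ) with w₁ ≥ w₂ ≥ … ≥ wₙ real, and let ρ = U ρ_d U* for some n×n unitary matrix U. Then Σ_{k=1}^n w_k·w_{n+1−k} ≤ Re(Tr(ρ · ρ_d)) ≤ Σ_{k=1}^n w_k². -/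
/-!
Writing `B = (|U_{jk}|²)`, one has `Tr(ρ ρ_d) = wᵀ B w`, and `B` is doubly stochastic because `U`
is unitary. By Birkhoff's theorem `wᵀ B w` is a convex combination of the sums
`Σ_k w_k w_{σ k}` over permutations `σ`, each of which lies between the antitone pairing
`Σ_k w_k w_{n+1-k}` and `Σ_k w_k²` by the rearrangement inequality.
-/

open Matrix Finset

theorem Matrix.map_normSq_mem_doublyStochastic {n : Type*} [Fintype n] [DecidableEq n]
    {U : Matrix n n ℂ} (hU : U ∈ unitaryGroup n ℂ) :
    U.map Complex.normSq ∈ doublyStochastic ℝ n := by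
  refine mem_doublyStochastic_iff_sum.2
    ⟨fun _ _ => Complex.normSq_nonneg _, fun j => ?_, fun k => ?_⟩
  · have h := congrFun (congrFun ((mem_unitaryGroup_iff).1 hU) j) j
    simp only [mul_apply, star_apply, Complex.star_def, Complex.mul_conj, one_apply_eq] at h
    exact_mod_cast h
  · have h := congrFun (congrFun ((mem_unitaryGroup_iff').1 hU) k) k
    simp only [mul_apply, star_apply, Complex.star_def, mul_comm ((starRingEnd ℂ) _),
      Complex.mul_conj, one_apply_eq] at h
    exact_mod_cast h

theorem Matrix.trace_conj_diagonal_mul_diagonal {n : Type*} [Fintype n] [DecidableEq n]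
    (U : Matrix n n ℂ) (v w : n → ℝ) :
    trace (U * diagonal (fun k => (v k : ℂ)) * star U * diagonal (fun k => (w k : ℂ))) =
      (w ⬝ᵥ (U.map Complex.normSq *ᵥ v) : ℝ) := by
  simp only [trace, diag, mul_diagonal, mul_apply (M := U * _)]
  simp only [star_apply, Complex.star_def, dotProduct, mulVec, map_apply, Complex.ofReal_sum,
    Complex.ofReal_mul, Finset.sum_mul, Finset.mul_sum]
  refine Finset.sum_congr rfl fun j _ => Finset.sum_congr rfl fun k _ => ?_
  rw [Complex.normSq_eq_conj_mul_self]
  ring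

theorem Matrix.dotProduct_mulVec_mem_convexHull {R n : Type*} [Field R] [LinearOrder R]
    [IsStrictOrderedRing R] [Fintype n] [DecidableEq n] {B : Matrix n n R}
    (hB : B ∈ doublyStochastic R n) (x y : n → R) :
    x ⬝ᵥ (B *ᵥ y) ∈ convexHull R (Set.range fun σ : Equiv.Perm n => x ⬝ᵥ (y ∘ σ)) := by
  let L : Matrix n n R →ₗ[R] R :=
    { toFun := fun M => x ⬝ᵥ (M *ᵥ y)
      map_add' := fun M N => by simp [add_mulVec, dotProduct_add]
      map_smul' := fun c M => by simp [smul_mulVec, dotProduct_smul] }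
  have hperm : L '' {M | ∃ σ : Equiv.Perm n, σ.permMatrix R = M} =
      Set.range fun σ : Equiv.Perm n => x ⬝ᵥ (y ∘ σ) := by
    ext; simp [L, permMatrix_mulVec]
  rw [← hperm, ← L.image_convexHull, ← doublyStochastic_eq_convexHull_permMatrix]
  exact ⟨B, hB, rfl⟩

theorem Antitone.sum_mul_rev_le_sum_mul_comp_perm {α : Type*} [Semiring α] [LinearOrder α]
    [IsStrictOrderedRing α] [ExistsAddOfLE α] {n : ℕ} {w : Fin n → α} (hw : Antitone w)
    (σ : Equiv.Perm (Fin n)) :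
    ∑ k, w k * w k.rev ≤ ∑ k, w k * w (σ k) := by
  simpa using (hw.antivary (hw.comp Fin.rev_anti)).sum_mul_le_sum_mul_comp_perm
    (σ := σ.trans Fin.revPerm)

/-- For `ρ_d = diag(w₁,…,wₙ)` with `w₁ ≥ … ≥ wₙ` real and
`ρ = U ρ_d U*` unitary, one has
`Σ_k w_k w_{n+1-k} ≤ Re Tr(ρ ρ_d) ≤ Σ_k w_k²`. -/
theorem stmt11 {n : ℕ} (w : Fin n → ℝ) (hw : Antitone w)
    (ρd ρ : Matrix (Fin n) (Fin n) ℂ)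
    (hρd : ρd = Matrix.diagonal fun k => (w k : ℂ))
    (U : Matrix (Fin n) (Fin n) ℂ) (hU : U ∈ Matrix.unitaryGroup (Fin n) ℂ)
    (hρ : ρ = U * ρd * star U) :
    (∑ k : Fin n, w k * w k.rev) ≤ (Matrix.trace (ρ * ρd)).re ∧
    (Matrix.trace (ρ * ρd)).re ≤ ∑ k : Fin n, (w k) ^ 2 := by
  subst hρ hρd
  rw [trace_conj_diagonal_mul_diagonal, Complex.ofReal_re]
  have hperm : Set.range (fun σ : Equiv.Perm (Fin n) => w ⬝ᵥ (w ∘ σ)) ⊆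
      Set.Icc (∑ k, w k * w k.rev) (∑ k, w k ^ 2) := by
    rintro _ ⟨σ, rfl⟩
    simpa only [sq] using ⟨hw.sum_mul_rev_le_sum_mul_comp_perm σ,
      (monovary_self w).sum_mul_comp_perm_le_sum_mul⟩
  exact convexHull_min hperm (convex_Icc _ _)
    (dotProduct_mulVec_mem_convexHull (map_normSq_mem_doublyStochastic hU) w w)
end

section
/- Let ρ₁ and ρ₂ be 2×2 density matrices that are unitarily equivalent and not equal to (1/2)·I. Then the commutator [ρ₁, ρ₂] is a diagonal matrix if and only if at least one of the following holds: (a) ρ₁ = ρ₂; (b) ρ₁ + ρ₂ = I; (c) both diagonal entries of ρ₁ equal 1/2 and both diagonal entries of ρ₂ equal 1/2. -/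
/-!
A Hermitian trace-one `2 × 2` matrix is `½ I + !![a, b; b̄, -a]` with `a` real. Unitary
equivalence preserves the determinant `¼ - (a² + |b|²)`, and the off-diagonal entry of
`[ρ₁, ρ₂]` is `2 (a q - p b)`, so the commutator is diagonal iff `a q = p b`. Taking norms,
`a² |q|² = p² |b|²`; together with `a² + |b|² = p² + |q|²` this forces `a² = p²`, hence
`(a, b) = ±(p, q)`, unless `a = p = 0`.
-/

open Matrix
open scoped ComplexOrder

theorem Matrix.isDiag_fin_two_iff {α : Type*} [Zero α] {M : Matrix (Fin 2) (Fin 2) α} :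
    M.IsDiag ↔ M 0 1 = 0 ∧ M 1 0 = 0 :=
  ⟨fun h => ⟨h zero_ne_one, h one_ne_zero⟩, fun ⟨h01, h10⟩ i j hij => by
    fin_cases i <;> fin_cases j <;> simp_all⟩

noncomputable def traceOneHermitian (a : ℝ) (b : ℂ) : Matrix (Fin 2) (Fin 2) ℂ :=
  !![1 / 2 + a, b; star b, 1 / 2 - a]

theorem Matrix.IsHermitian.exists_eq_traceOneHermitian {ρ : Matrix (Fin 2) (Fin 2) ℂ}
    (hρ : ρ.IsHermitian) (htr : ρ.trace = 1) : ∃ a b, ρ = traceOneHermitian a b := by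
  obtain ⟨a, h00⟩ : ∃ a : ℝ, ρ 0 0 = 1 / 2 + a :=
    ⟨(ρ 0 0).re - 1 / 2, by
      rw [Complex.ofReal_sub, Complex.conj_eq_iff_re.mp (hρ.apply 0 0)]; push_cast; ring⟩
  have h11 : ρ 1 1 = 1 / 2 - a := by
    linear_combination (trace_fin_two ρ).symm.trans htr - h00
  refine ⟨a, ρ 0 1, ?_⟩
  conv_lhs => rw [eta_fin_two ρ]
  rw [h00, h11, ← hρ.apply 1 0]
  rfl

theorem det_traceOneHermitian (a : ℝ) (b : ℂ) :
    (traceOneHermitian a b).det = 1 / 4 - (a ^ 2 + Complex.normSq b : ℝ) := by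
  rw [traceOneHermitian, det_fin_two_of, Complex.star_def, Complex.mul_conj]
  push_cast
  ring

theorem traceOneHermitian_inj {a p : ℝ} {b q : ℂ} :
    traceOneHermitian a b = traceOneHermitian p q ↔ a = p ∧ b = q := by
  refine ⟨fun h => ⟨?_, congrFun₂ h 0 1⟩, fun ⟨ha, hb⟩ => ha ▸ hb ▸ rfl⟩
  simpa [traceOneHermitian] using congrFun₂ h 0 0

theorem traceOneHermitian_neg (a : ℝ) (b : ℂ) :
    traceOneHermitian (-a) (-b) = 1 - traceOneHermitian a b := by
  ext i j
  fin_cases i <;> fin_cases j <;> simp [traceOneHermitian] <;> ring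

theorem traceOneHermitian_add_eq_one_iff {a p : ℝ} {b q : ℂ} :
    traceOneHermitian a b + traceOneHermitian p q = 1 ↔ a = -p ∧ b = -q := by
  rw [← eq_sub_iff_add_eq, ← traceOneHermitian_neg, traceOneHermitian_inj]

theorem traceOneHermitian_diag_eq_half_iff {a : ℝ} {b : ℂ} :
    traceOneHermitian a b 0 0 = 1 / 2 ∧ traceOneHermitian a b 1 1 = 1 / 2 ↔ a = 0 := by
  simp [traceOneHermitian]

theorem isDiag_commutator_traceOneHermitian_iff {a p : ℝ} {b q : ℂ} :
    (traceOneHermitian a b * traceOneHermitian p q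
      - traceOneHermitian p q * traceOneHermitian a b).IsDiag ↔ (a : ℂ) * q = p * b := by
  set K := traceOneHermitian a b * traceOneHermitian p q
    - traceOneHermitian p q * traceOneHermitian a b
  have h01 : K 0 1 = 2 * (a * q - p * b) := by
    simp only [K, traceOneHermitian, Matrix.sub_apply, mul_apply, Fin.sum_univ_two, of_apply,
      cons_val', cons_val_zero, cons_val_one, cons_val_fin_one]
    ring
  have h10 : K 1 0 = -star (2 * (a * q - p * b)) := by
    simp only [K, traceOneHermitian, Matrix.sub_apply, mul_apply, Fin.sum_univ_two, of_apply,
      cons_val', cons_val_zero, cons_val_one, cons_val_fin_one, star_mul', star_sub,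
      Complex.star_def, Complex.conj_ofReal, map_ofNat]
    ring
  rw [isDiag_fin_two_iff, h01, h10, neg_eq_zero, star_eq_zero, and_self, mul_eq_zero,
    or_iff_right two_ne_zero, sub_eq_zero]

theorem eq_and_eq_or_eq_neg_and_eq_neg_or_eq_zero {a p : ℝ} {b q : ℂ}
    (hnorm : a ^ 2 + Complex.normSq b = p ^ 2 + Complex.normSq q) (hmul : (a : ℂ) * q = p * b) :
    (a = p ∧ b = q) ∨ (a = -p ∧ b = -q) ∨ (a = 0 ∧ p = 0) := by
  rcases eq_or_ne a 0 with rfl | ha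
  · refine .inr (.inr ⟨rfl, ?_⟩)
    by_contra hp
    have hb : b = 0 := by simpa [hp] using hmul.symm
    have hpos : 0 < p ^ 2 + Complex.normSq q :=
      add_pos_of_pos_of_nonneg (by positivity) (Complex.normSq_nonneg q)
    rw [hb, Complex.normSq_zero] at hnorm
    linarith
  have hns : a ^ 2 * Complex.normSq q = p ^ 2 * Complex.normSq b := by
    simpa [Complex.normSq_mul, sq] using congrArg Complex.normSq hmul
  have hsq : a ^ 2 = p ^ 2 := by
    have hpos : 0 < a ^ 2 + Complex.normSq b :=
      add_pos_of_pos_of_nonneg (by positivity) (Complex.normSq_nonneg b)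
    have : (a ^ 2 - p ^ 2) * (a ^ 2 + Complex.normSq b) = 0 := by
      linear_combination a ^ 2 * hnorm + hns
    exact sub_eq_zero.mp ((mul_eq_zero.mp this).resolve_right hpos.ne')
  have ha' : (a : ℂ) ≠ 0 := Complex.ofReal_ne_zero.mpr ha
  rcases sq_eq_sq_iff_eq_or_eq_neg.mp hsq with rfl | rfl
  · exact .inl ⟨rfl, (mul_left_cancel₀ ha' hmul).symm⟩
  · exact .inr (.inl ⟨rfl, mul_left_cancel₀ ha' (by push_cast at hmul ⊢; linear_combination hmul)⟩)

theorem stmt13_general (ρ₁ ρ₂ : Matrix (Fin 2) (Fin 2) ℂ)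
    (h₁pos : ρ₁.PosSemidef) (h₁tr : Matrix.trace ρ₁ = 1)
    (h₂pos : ρ₂.PosSemidef) (h₂tr : Matrix.trace ρ₂ = 1)
    (hunit : ∃ U ∈ Matrix.unitaryGroup (Fin 2) ℂ, ρ₁ = U * ρ₂ * star U) :
    (ρ₁ * ρ₂ - ρ₂ * ρ₁).IsDiag ↔
      (ρ₁ = ρ₂ ∨ ρ₁ + ρ₂ = 1 ∨
        (ρ₁ 0 0 = 1 / 2 ∧ ρ₁ 1 1 = 1 / 2 ∧ ρ₂ 0 0 = 1 / 2 ∧ ρ₂ 1 1 = 1 / 2)) := by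
  obtain ⟨U, hU, hconj⟩ := hunit
  have hdet : ρ₁.det = ρ₂.det := hconj ▸
    det_conj_of_mul_eq_one (mem_unitaryGroup_iff.mp hU) (mem_unitaryGroup_iff'.mp hU)
  obtain ⟨a, b, rfl⟩ := h₁pos.isHermitian.exists_eq_traceOneHermitian h₁tr
  obtain ⟨p, q, rfl⟩ := h₂pos.isHermitian.exists_eq_traceOneHermitian h₂tr
  have hnorm : a ^ 2 + Complex.normSq b = p ^ 2 + Complex.normSq q := by
    rw [det_traceOneHermitian, det_traceOneHermitian, sub_right_inj] at hdet
    exact_mod_cast hdet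
  rw [isDiag_commutator_traceOneHermitian_iff, traceOneHermitian_inj,
    traceOneHermitian_add_eq_one_iff, ← and_assoc, traceOneHermitian_diag_eq_half_iff,
    traceOneHermitian_diag_eq_half_iff]
  refine ⟨eq_and_eq_or_eq_neg_and_eq_neg_or_eq_zero hnorm, ?_⟩
  rintro (⟨rfl, rfl⟩ | ⟨rfl, rfl⟩ | ⟨rfl, rfl⟩) <;> push_cast <;> ring

/-- For unitarily equivalent 2×2 density matrices `ρ₁, ρ₂`, neither
equal to `(1/2)I`, the commutator `[ρ₁, ρ₂]` is diagonal iff `ρ₁ = ρ₂`, or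
`ρ₁ + ρ₂ = I`, or all diagonal entries of `ρ₁` and `ρ₂` equal `1/2`. -/
theorem stmt13 (ρ₁ ρ₂ : Matrix (Fin 2) (Fin 2) ℂ)
    (h₁pos : ρ₁.PosSemidef) (h₁tr : Matrix.trace ρ₁ = 1)
    (h₂pos : ρ₂.PosSemidef) (h₂tr : Matrix.trace ρ₂ = 1)
    (hunit : ∃ U ∈ Matrix.unitaryGroup (Fin 2) ℂ, ρ₁ = U * ρ₂ * star U)
    (h₁ne : ρ₁ ≠ (1 / 2 : ℂ) • (1 : Matrix (Fin 2) (Fin 2) ℂ))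
    (h₂ne : ρ₂ ≠ (1 / 2 : ℂ) • (1 : Matrix (Fin 2) (Fin 2) ℂ)) :
    (ρ₁ * ρ₂ - ρ₂ * ρ₁).IsDiag ↔
      (ρ₁ = ρ₂ ∨ ρ₁ + ρ₂ = 1 ∨
        (ρ₁ 0 0 = 1 / 2 ∧ ρ₁ 1 1 = 1 / 2 ∧ ρ₂ 0 0 = 1 / 2 ∧ ρ₂ 1 1 = 1 / 2)) :=
  stmt13_general ρ₁ ρ₂ h₁pos h₁tr h₂pos h₂tr hunit
end
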